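/- arXiv:0808.2942 — 2 statements merged into one kernel-verified Lean document; each statement's English description precedes it below -/
import Mathlib

section
/- Let I be a nonempty set. The bounded linear functional tr : ℓ¹(I×I) → ℂ defined by tr(c) = Σ_{i∈I} c(i,i) is nonzero (indeed tr(δ_{(k,k)}) = 1 for any k ∈ I), and its kernel equals the closed linear span in ℓ¹(I×I) of the set {δ_{(i,j)} : i,j ∈ I, i ≠ j} ∪ {δ_{(i,i)} − δ_{(j,j)} : i,j ∈ I}. -/
/-!
The diagonal sum is a contraction of `ℓ¹(I×I)`, so `tr` is continuous and its kernel is closed;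
the generators visibly lie in it. Conversely, fix `k`: the continuous map
`c ↦ c - tr c • δ_(k,k)` sends every point mass into the span of the generators, hence, since
finitely supported functions are dense in `ℓ¹`, all of `ℓ¹(I×I)` into its closure; on the kernel
this map is the identity.
-/

open scoped TensorProduct BigOperators ENNReal
open Filter

noncomputable section

/-- `ℓ¹(X)`: the Banach space of absolutely summable complex functions on `X`. -/
abbrev L1 (X : Type) : Type := lp (fun _ : X => ℂ) 1

open Classical in
/-- The point mass `δ_x` in `ℓ¹(X)`. -/
noncomputable def delta {X : Type} (x : X) : L1 X := lp.single 1 x (1 : ℂ)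

theorem lp.mem_of_forall_single_mem {α : Type*} {E : α → Type*} {p : ℝ≥0∞} [Fact (1 ≤ p)]
    [∀ i, NormedAddCommGroup (E i)] [DecidableEq α] (hp : p ≠ ∞) {W : AddSubgroup (lp E p)}
    (hW : IsClosed (W : Set (lp E p))) (h : ∀ i a, lp.single p i a ∈ W) (f : lp E p) : f ∈ W :=
  hW.mem_of_tendsto (lp.hasSum_single hp f) (.of_forall fun _ => W.sum_mem fun i _ => h i (f i))

section L1

variable {X : Type}

theorem delta_eq_single [DecidableEq X] (x : X) : delta x = lp.single 1 x (1 : ℂ) := by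
  unfold delta; congr; exact Subsingleton.elim _ _

theorem single_eq_smul_delta [DecidableEq X] (x : X) (a : ℂ) :
    (lp.single 1 x a : L1 X) = a • delta x := by
  rw [delta_eq_single, ← lp.single_smul, smul_eq_mul, mul_one]

theorem L1.summable_norm (f : L1 X) : Summable fun x => ‖f x‖ := by
  simpa using (lp.memℓp f).summable (by norm_num)

theorem L1.norm_eq_tsum_norm (f : L1 X) : ‖f‖ = ∑' x, ‖f x‖ := by
  simpa using lp.norm_eq_tsum_rpow (by norm_num) f

end L1

section DiagTrace

variable {I : Type}

theorem summable_norm_diag (c : L1 (I × I)) : Summable fun i : I => ‖c (i, i)‖ :=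
  (L1.summable_norm c).comp_injective fun _ _ h => congrArg Prod.fst h

theorem norm_tsum_diag_le (c : L1 (I × I)) : ‖∑' i : I, c (i, i)‖ ≤ ‖c‖ :=
  calc ‖∑' i : I, c (i, i)‖ ≤ ∑' i : I, ‖c (i, i)‖ := norm_tsum_le_tsum_norm (summable_norm_diag c)
    _ ≤ ∑' x : I × I, ‖c x‖ :=
        tsum_comp_le_tsum_of_inj (L1.summable_norm c) (fun _ => norm_nonneg _)
          fun _ _ h => congrArg Prod.fst h
    _ = ‖c‖ := (L1.norm_eq_tsum_norm c).symm

variable (I) in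
def diagTrace : L1 (I × I) →L[ℂ] ℂ :=
  LinearMap.mkContinuous
    { toFun := fun c => ∑' i : I, c (i, i)
      map_add' := fun a b =>
        (summable_norm_diag a).of_norm.tsum_add (summable_norm_diag b).of_norm
      map_smul' := fun _ _ => tsum_mul_left }
    1 fun c => (one_mul ‖c‖).symm ▸ norm_tsum_diag_le c

theorem diagTrace_apply (c : L1 (I × I)) : diagTrace I c = ∑' i : I, c (i, i) := rfl

theorem diagTrace_delta_self (i : I) : diagTrace I (delta (i, i)) = 1 := by
  classical
  simp [diagTrace_apply, delta_eq_single, lp.single_apply, Pi.single_apply]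

theorem diagTrace_delta_of_ne {i j : I} (hij : i ≠ j) : diagTrace I (delta (i, j)) = 0 := by
  classical
  have hoff (l : I) : ¬(l = i ∧ l = j) := fun h => hij (h.1.symm.trans h.2)
  simp [diagTrace_apply, delta_eq_single, lp.single_apply, hoff]

variable (I) in
def traceZeroGenerators : Set (L1 (I × I)) :=
  {x | ∃ i j : I, i ≠ j ∧ x = delta (i, j)} ∪ {x | ∃ i j : I, x = delta (i, i) - delta (j, j)}

theorem span_traceZeroGenerators_le_ker :
    Submodule.span ℂ (traceZeroGenerators I) ≤
      LinearMap.ker (diagTrace I : L1 (I × I) →ₗ[ℂ] ℂ) := by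
  rw [Submodule.span_le]
  rintro _ (⟨i, j, hij, rfl⟩ | ⟨i, j, rfl⟩)
  · exact diagTrace_delta_of_ne hij
  · simp [diagTrace_delta_self]

theorem sub_diagTrace_smul_delta_mem_closure (k : I) (c : L1 (I × I)) :
    c - diagTrace I c • delta (k, k) ∈
      (Submodule.span ℂ (traceZeroGenerators I)).topologicalClosure := by
  classical
  let P : L1 (I × I) →L[ℂ] L1 (I × I) := .id ℂ _ - (diagTrace I).smulRight (delta (k, k))
  let W := (Submodule.span ℂ (traceZeroGenerators I)).topologicalClosure.comap
    (P : L1 (I × I) →ₗ[ℂ] L1 (I × I))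
  have hW : IsClosed (W : Set (L1 (I × I))) :=
    (Submodule.isClosed_topologicalClosure _).preimage P.continuous
  have hsingle (x : I × I) (a : ℂ) : lp.single 1 x a ∈ W := by
    rw [single_eq_smul_delta]
    refine W.smul_mem a (Submodule.le_topologicalClosure _ (Submodule.subset_span ?_))
    obtain ⟨i, j⟩ := x
    by_cases hij : i = j
    · subst hij; right; exact ⟨i, k, by simp [P, diagTrace_delta_self]⟩
    · left; exact ⟨i, j, hij, by simp [P, diagTrace_delta_of_ne hij]⟩
  exact lp.mem_of_forall_single_mem (W := W.toAddSubgroup) ENNReal.one_ne_top hW hsingle c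

end DiagTrace

/-- For a nonempty set `I`, the bounded linear functional
`tr : ℓ¹(I×I) → ℂ`, `tr c = ∑_{i ∈ I} c (i,i)`, is nonzero (indeed
`tr (δ_(k,k)) = 1` for every `k`), and its kernel is the closed linear span of
`{δ_(i,j) : i ≠ j} ∪ {δ_(i,i) - δ_(j,j) : i, j ∈ I}`. -/
theorem brandt_morita_stmt0 (I : Type) [Nonempty I] :
    ∃ tr : L1 (I × I) →L[ℂ] ℂ,
      (∀ c : L1 (I × I), tr c = ∑' i : I, c (i, i)) ∧
      tr ≠ 0 ∧
      (∀ k : I, tr (delta (k, k)) = 1) ∧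
      LinearMap.ker (tr : L1 (I × I) →ₗ[ℂ] ℂ) =
        (Submodule.span ℂ
          ({x : L1 (I × I) | ∃ i j : I, i ≠ j ∧ x = delta (i, j)} ∪
           {x : L1 (I × I) | ∃ i j : I, x = delta (i, i) - delta (j, j)})).topologicalClosure := by
  obtain ⟨k⟩ := ‹Nonempty I›
  refine ⟨diagTrace I, diagTrace_apply, fun h => ?_, diagTrace_delta_self, le_antisymm ?_ ?_⟩
  · simpa [h] using diagTrace_delta_self k
  · intro c hc
    have := sub_diagTrace_smul_delta_mem_closure k c
    rwa [show diagTrace I c = 0 from hc, zero_smul, sub_zero] at this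
  · exact Submodule.topologicalClosure_minimal _ span_traceZeroGenerators_le_ker
      (diagTrace I).isClosed_ker
end
end

section
/- Let I be a nonempty set. The bounded linear functional ν̄ : ℓ¹(I) ⊗̂ ℓ¹(I) → ℂ determined by ν̄(a ⊗ b) = Σ_{i∈I} a(i)b(i) is nonzero, and its kernel equals the closed linear span N of {b·a ⊗ b′ − b ⊗ a·b′ : b, b′ ∈ ℓ¹(I), a ∈ M_I}. Consequently the induced map ν : ℓ¹(I) ⊗̂_{M_I} ℓ¹(I) → ℂ, ν(a ⊗ b) = Σ_{i∈I} a(i)b(i), is an isomorphism of Banach spaces. -/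
open scoped TensorProduct BigOperators ENNReal
open Filter

noncomputable section

/-- The projective tensor norm of an element of the algebraic tensor product
`E ⊗[ℂ] F`: the infimum of `∑ ‖xᵢ‖ ‖yᵢ‖` over all finite representations
`z = ∑ xᵢ ⊗ yᵢ`. -/
def projNorm {E F : Type} [SeminormedAddCommGroup E] [NormedSpace ℂ E]
    [SeminormedAddCommGroup F] [NormedSpace ℂ F] (z : E ⊗[ℂ] F) : ℝ :=
  sInf {r : ℝ | ∃ (n : ℕ) (x : Fin n → E) (y : Fin n → F),
    z = ∑ i, x i ⊗ₜ[ℂ] y i ∧ r = ∑ i, ‖x i‖ * ‖y i‖}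

/-- `(T, φ)` is a realization of the completed projective tensor product `E ⊗̂ F`:
`T` is a Banach space, the canonical map from the algebraic tensor product is an
isometry with respect to the projective tensor norm, and it has dense range. -/
structure IsProjTensor (E F T : Type) [SeminormedAddCommGroup E] [NormedSpace ℂ E]
    [SeminormedAddCommGroup F] [NormedSpace ℂ F]
    [SeminormedAddCommGroup T] [NormedSpace ℂ T]
    (φ : E →ₗ[ℂ] F →ₗ[ℂ] T) : Prop where
  complete : CompleteSpace T
  isometry : ∀ z : E ⊗[ℂ] F, ‖TensorProduct.lift φ z‖ = projNorm z
  dense : DenseRange ⇑(TensorProduct.lift φ)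

/-- The closed linear span of the `A`-balancing relations
`{x·a ⊗ y - x ⊗ a·y}` inside a realization `T` of `E ⊗̂ F`; the quotient
`T ⧸ balancer φ r l` is the `A`-module tensor product `E ⊗̂_A F`. -/
def balancer {A E F T : Type} [SeminormedAddCommGroup E] [NormedSpace ℂ E]
    [SeminormedAddCommGroup F] [NormedSpace ℂ F]
    [SeminormedAddCommGroup T] [NormedSpace ℂ T]
    (φ : E →ₗ[ℂ] F →ₗ[ℂ] T) (r : E → A → E) (l : A → F → F) : Submodule ℂ T :=
  (Submodule.span ℂ {z : T | ∃ (x : E) (a : A) (y : F), z = φ (r x a) y - φ x (l a y)}).topologicalClosure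

/-!
The functional `ν̄` comes from the universal property of `⊗̂` applied to the pairing
`(a, b) ↦ ∑ a(i) b(i)`: the pairing is bounded by the projective norm, so it factors through the
dense image of the algebraic tensor product and extends by Hahn–Banach. The balancing relations
lie in its kernel by Fubini.

Conversely, fix `i₀` and `e = δ_{i₀} ⊗ δ_{i₀}`. For the matrix unit `c = E_{i₀ i}` the relation
`δ_{i₀}·c ⊗ b - δ_{i₀} ⊗ c·b` is `δ_i ⊗ b - b(i) e`, so `t ≡ ν̄(t) e` modulo `N` holds for
`t = δ_i ⊗ b`, then by continuity for all `a ⊗ b`, and by density for all `t`. Hence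
`ker ν̄ ⊆ N`, and `ν̄` induces an isomorphism of the one-dimensional space `T ⧸ N` onto `ℂ`.
-/

namespace L1

variable {X Y Z : Type}

lemma hasSum_norm (f : L1 X) : HasSum (fun x => ‖f x‖) ‖f‖ := by
  simpa using lp.hasSum_norm (p := 1) (by norm_num) f

lemma summable (f : L1 X) : Summable f :=
  (hasSum_norm f).summable.of_norm

lemma memℓp_of_norm_le {f : X → ℂ} {g : X → ℝ} (hg : Summable g) (hfg : ∀ x, ‖f x‖ ≤ g x) :
    Memℓp f 1 :=
  (memℓp_gen (p := 1) (by simpa using hg.abs)).mono hfg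

lemma norm_le_tsum_of_le {f : L1 X} {g : X → ℝ} (hg : Summable g) (hfg : ∀ x, ‖f x‖ ≤ g x) :
    ‖f‖ ≤ ∑' x, g x :=
  (hasSum_norm f).tsum_eq ▸ (hasSum_norm f).summable.tsum_le_tsum hfg hg

lemma norm_apply_mul_le (x : L1 Y) (y : Y) (w : ℂ) : ‖x y * w‖ ≤ ‖x‖ * ‖w‖ := by
  rw [norm_mul]; gcongr; exact lp.norm_apply_le_norm one_ne_zero x y

def compMul (g : Z → Y) : L1 Y →L[ℂ] L1 Z →L[ℂ] L1 Z :=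
  LinearMap.mkContinuous₂
    (LinearMap.mk₂ ℂ
      (fun x c => ⟨fun z => x (g z) * c z, memℓp_of_norm_le
        ((hasSum_norm c).summable.mul_left ‖x‖) fun z => norm_apply_mul_le x (g z) (c z)⟩)
      (fun _ _ _ => lp.ext <| funext fun _ => add_mul _ _ _)
      (fun _ _ _ => lp.ext <| funext fun _ => mul_assoc _ _ _)
      (fun _ _ _ => lp.ext <| funext fun _ => mul_add _ _ _)
      (fun _ _ _ => lp.ext <| funext fun _ => mul_left_comm _ _ _))
    1 fun x c => by
      rw [one_mul, ← (hasSum_norm c).tsum_eq, ← tsum_mul_left]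
      exact norm_le_tsum_of_le ((hasSum_norm c).summable.mul_left ‖x‖)
        fun z => norm_apply_mul_le x (g z) (c z)

def sumRows : L1 (X × Y) →L[ℂ] L1 X :=
  LinearMap.mkContinuous
    { toFun := fun f => ⟨fun x => ∑' y, f (x, y), memℓp_of_norm_le (hasSum_norm f).summable.prod
        fun x => norm_tsum_le_tsum_norm ((hasSum_norm f).summable.prod_factor x)⟩
      map_add' := fun f f' => lp.ext <| funext fun x =>
        ((summable f).prod_factor x).tsum_add ((summable f').prod_factor x)
      map_smul' := fun s f => lp.ext <| funext fun x => tsum_mul_left }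
    1 fun f => by
      rw [one_mul, ← (hasSum_norm f).tsum_eq, (hasSum_norm f).summable.tsum_prod]
      exact norm_le_tsum_of_le (hasSum_norm f).summable.prod
        fun x => norm_tsum_le_tsum_norm ((hasSum_norm f).summable.prod_factor x)

def reindex (e : X ≃ Y) : L1 Y →L[ℂ] L1 X :=
  LinearMap.mkContinuous
    { toFun := fun f => ⟨fun x => f (e x), memℓp_of_norm_le
        (e.summable_iff.mpr (hasSum_norm f).summable) fun _ => le_rfl⟩
      map_add' := fun _ _ => rfl
      map_smul' := fun _ _ => rfl }
    1 fun f => by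
      rw [one_mul, ← (hasSum_norm f).tsum_eq, ← e.tsum_eq]
      exact norm_le_tsum_of_le (e.summable_iff.mpr (hasSum_norm f).summable) fun _ => le_rfl

def sumCols : L1 (X × Y) →L[ℂ] L1 Y :=
  sumRows ∘L reindex (Equiv.prodComm Y X)

def mulVec : L1 (X × Y) →L[ℂ] L1 Y →L[ℂ] L1 X :=
  ContinuousLinearMap.compL ℂ _ _ _ sumRows ∘L (compMul Prod.snd).flip

lemma mulVec_apply (c : L1 (X × Y)) (y : L1 Y) (i : X) :
    mulVec c y i = ∑' k, c (i, k) * y k :=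
  tsum_congr fun _ => mul_comm _ _

def vecMul : L1 X →L[ℂ] L1 (X × Y) →L[ℂ] L1 Y :=
  ContinuousLinearMap.compL ℂ _ _ _ sumCols ∘L compMul Prod.fst

lemma vecMul_apply (x : L1 X) (c : L1 (X × Y)) (j : Y) :
    vecMul x c j = ∑' k, x k * c (k, j) := rfl

def dotProduct : L1 X →L[ℂ] L1 X →L[ℂ] ℂ :=
  ContinuousLinearMap.compL ℂ _ _ _ (lp.tsumCLM ℂ X ℂ) ∘L compMul id

lemma dotProduct_apply (x y : L1 X) : dotProduct x y = ∑' i, x i * y i := rfl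

lemma dotProduct_vecMul (x : L1 X) (c : L1 (X × Y)) (y : L1 Y) :
    dotProduct (vecMul x c) y = dotProduct x (mulVec c y) := by
  have hs : Summable fun p : X × Y => x p.1 * c p * y p.2 := by
    have : Summable fun p : X × Y => y p.2 * (x p.1 * c p) :=
      summable (compMul Prod.snd y (compMul Prod.fst x c))
    simpa only [mul_comm (y _), mul_assoc] using this
  simp only [dotProduct_apply, vecMul_apply, mulVec_apply, ← tsum_mul_right, ← tsum_mul_left,
    ← mul_assoc]
  exact hs.tsum_comm

lemma dotProduct_single_left [DecidableEq X] (k : X) (y : L1 X) :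
    dotProduct (lp.single 1 k 1) y = y k := by
  simp [dotProduct_apply, lp.single_apply, Pi.single_apply]

lemma vecMul_single_left_apply [DecidableEq X] (k : X) (c : L1 (X × Y)) (j : Y) :
    vecMul (lp.single 1 k 1) c j = c (k, j) := by
  simp [vecMul_apply, lp.single_apply, Pi.single_apply]

lemma mulVec_single_left [DecidableEq X] [DecidableEq Y] (p : X × Y) (y : L1 Y) :
    mulVec (lp.single 1 p 1) y = y p.2 • lp.single 1 p.1 1 := by
  ext i
  by_cases h : i = p.1 <;> simp [mulVec_apply, lp.single_apply, Pi.single_apply, Prod.ext_iff, h]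

end L1

section ProjectiveTensor

open TensorProduct

variable {E F T : Type} [SeminormedAddCommGroup E] [NormedSpace ℂ E]
  [SeminormedAddCommGroup F] [NormedSpace ℂ F] [SeminormedAddCommGroup T] [NormedSpace ℂ T]

lemma projNorm_tmul_le (x : E) (y : F) : projNorm (x ⊗ₜ[ℂ] y) ≤ ‖x‖ * ‖y‖ :=
  csInf_le ⟨0, by
      rintro r ⟨n, x, y, -, rfl⟩
      exact Finset.sum_nonneg fun i _ => by positivity⟩
    ⟨1, fun _ => x, fun _ => y, by simp, by simp⟩

lemma norm_lift_le_projNorm (B : E →L[ℂ] F →L[ℂ] ℂ) (z : E ⊗[ℂ] F) :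
    ‖lift B.toLinearMap₁₂ z‖ ≤ ‖B‖ * projNorm z := by
  rw [projNorm, ← smul_eq_mul, ← Real.sInf_smul_of_nonneg (norm_nonneg B)]
  obtain ⟨n, x, y, hz⟩ := exists_sum_tmul_eq z
  refine le_csInf ⟨_, Set.smul_mem_smul_set ⟨n, x, y, hz, rfl⟩⟩ ?_
  rintro _ ⟨_, ⟨n, x, y, rfl, rfl⟩, rfl⟩
  simp only [map_sum, lift.tmul, ContinuousLinearMap.toLinearMap₁₂_apply_apply_apply, smul_eq_mul,
    Finset.mul_sum]
  refine (norm_sum_le _ _).trans (Finset.sum_le_sum fun i _ => ?_)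
  rw [← mul_assoc]
  exact B.le_opNorm₂ (x i) (y i)

variable {φ : E →ₗ[ℂ] F →ₗ[ℂ] T}

lemma IsProjTensor.norm_apply_apply_le (hφ : IsProjTensor E F T φ) (x : E) (y : F) :
    ‖φ x y‖ ≤ ‖x‖ * ‖y‖ := by
  have h := hφ.isometry (x ⊗ₜ y)
  rw [lift.tmul] at h
  exact h ▸ projNorm_tmul_le x y

lemma exists_continuousLinearMap_apply_apply_eq
    (hφ : ∀ z : E ⊗[ℂ] F, ‖lift φ z‖ = projNorm z) (B : E →L[ℂ] F →L[ℂ] ℂ) :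
    ∃ ν : T →L[ℂ] ℂ, ∀ x y, ν (φ x y) = B x y := by
  set f := lift φ
  have hker : LinearMap.ker f ≤ LinearMap.ker (lift B.toLinearMap₁₂) := fun z hz => by
    have := norm_lift_le_projNorm B z
    rw [← hφ, LinearMap.mem_ker.mp hz, norm_zero, mul_zero] at this
    exact norm_le_zero_iff.mp this
  let g : LinearMap.range f →ₗ[ℂ] ℂ :=
    (LinearMap.ker f).liftQ _ hker ∘ₗ f.quotKerEquivRange.symm.toLinearMap
  have hg : ∀ z, g ⟨f z, LinearMap.mem_range_self f z⟩ = lift B.toLinearMap₁₂ z := fun z => by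
    simp [g, LinearMap.quotKerEquivRange_symm_apply_image]
  let gc := g.mkContinuous ‖B‖ fun ⟨_, z, rfl⟩ => by
    rw [hg, Submodule.coe_norm, hφ]; exact norm_lift_le_projNorm B z
  obtain ⟨ν, hν, -⟩ := exists_extension_norm_eq _ gc
  refine ⟨ν, fun x y => ?_⟩
  have h := hν ⟨f (x ⊗ₜ y), LinearMap.mem_range_self f _⟩
  rw [LinearMap.mkContinuous_apply, hg] at h
  simpa [f] using h

end ProjectiveTensor


section Kernel

open L1 TensorProduct

variable {I T : Type} [NormedAddCommGroup T] [NormedSpace ℂ T] {φ : L1 I →ₗ[ℂ] L1 I →ₗ[ℂ] T}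

lemma balancer_le_ker (ν : T →L[ℂ] ℂ) (hν : ∀ x y, ν (φ x y) = dotProduct x y) :
    balancer φ (fun x a => vecMul x a) (fun a y => mulVec a y) ≤
      LinearMap.ker (ν : T →ₗ[ℂ] ℂ) := by
  refine Submodule.topologicalClosure_minimal _ (Submodule.span_le.mpr ?_) ν.isClosed_ker
  rintro _ ⟨x, c, y, rfl⟩
  simp [hν, dotProduct_vecMul]

lemma sub_smul_mem_balancer [DecidableEq I] (i₀ i : I) (y : L1 I) :
    φ (lp.single 1 i 1) y - y i • φ (lp.single 1 i₀ 1) (lp.single 1 i₀ 1) ∈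
      balancer φ (fun x a => vecMul x a) (fun a y => mulVec a y) := by
  refine Submodule.le_topologicalClosure _ (Submodule.subset_span
    ⟨lp.single 1 i₀ 1, lp.single 1 (i₀, i) 1, y, ?_⟩)
  have : vecMul (lp.single 1 i₀ 1) (lp.single 1 (i₀, i) 1) = lp.single 1 i (1 : ℂ) :=
    lp.ext <| funext fun j => by simp [vecMul_single_left_apply, lp.single_apply, Pi.single_apply]
  dsimp only
  rw [this, mulVec_single_left, map_smul]

lemma ker_le_balancer [Nonempty I] (hφ : IsProjTensor (L1 I) (L1 I) T φ) (ν : T →L[ℂ] ℂ)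
    (hν : ∀ x y, ν (φ x y) = dotProduct x y) :
    LinearMap.ker (ν : T →ₗ[ℂ] ℂ) ≤
      balancer φ (fun x a => vecMul x a) (fun a y => mulVec a y) := by
  classical
  obtain ⟨i₀⟩ := ‹Nonempty I›
  set N := balancer φ (fun x a => vecMul x a) (fun a y => mulVec a y)
  have : IsClosed (N : Set T) := Submodule.isClosed_topologicalClosure _
  let π : T →L[ℂ] T ⧸ N := ⟨N.mkQ, N.continuous_mkQ⟩
  let e := φ (lp.single 1 i₀ 1) (lp.single 1 i₀ 1)
  let Φ : L1 I →L[ℂ] L1 I →L[ℂ] T :=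
    φ.mkContinuous₂ 1 fun x y => by simpa using hφ.norm_apply_apply_le x y
  have hπφ : ∀ x y, π (φ x y) = dotProduct x y • π e := fun x y => by
    have : π ∘L Φ.flip y = (dotProduct.flip y).smulRight (π e) := by
      refine lp.ext_continuousLinearMap ENNReal.one_ne_top fun i => ?_
      refine ContinuousLinearMap.ext_ring ?_
      change π (φ (lp.single 1 i 1) y) = dotProduct (lp.single 1 i 1) y • π e
      rw [dotProduct_single_left, ← map_smul, ← sub_eq_zero, ← map_sub]
      exact (Submodule.Quotient.mk_eq_zero N).mpr (sub_smul_mem_balancer i₀ i y)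
    exact congr($this x)
  have hπ : π = ν.smulRight (π e) := by
    have : (π : T →ₗ[ℂ] T ⧸ N) ∘ₗ lift φ = (ν.smulRight (π e) : T →ₗ[ℂ] T ⧸ N) ∘ₗ lift φ :=
      TensorProduct.ext' fun x y => by simp [hπφ, hν]
    exact DFunLike.coe_injective <|
      hφ.dense.equalizer π.continuous (ν.smulRight _).continuous congr(⇑$this)
  intro t ht
  have h := congr($hπ t)
  rw [ContinuousLinearMap.smulRight_apply, show ν t = 0 from ht, zero_smul] at h
  exact (Submodule.Quotient.mk_eq_zero N).mp h

end Kernel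

lemma ContinuousLinearMap.exists_quotient_ker_equiv {𝕜 T : Type} [NontriviallyNormedField 𝕜]
    [CompleteSpace 𝕜] [NormedAddCommGroup T] [NormedSpace 𝕜 T] (ν : T →L[𝕜] 𝕜) (hν : ν ≠ 0) :
    ∃ e : (T ⧸ LinearMap.ker (ν : T →ₗ[𝕜] 𝕜)) ≃L[𝕜] 𝕜,
      ∀ t, e (Submodule.Quotient.mk t) = ν t := by
  have : IsClosed (LinearMap.ker (ν : T →ₗ[𝕜] 𝕜) : Set T) := ν.isClosed_ker
  have hsurj : Function.Surjective (ν : T →ₗ[𝕜] 𝕜) :=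
    LinearMap.surjective (by simpa [← ContinuousLinearMap.coe_inj] using hν)
  exact ⟨((ν : T →ₗ[𝕜] 𝕜).quotKerEquivOfSurjective hsurj).symm.toContinuousLinearEquiv.symm,
    fun _ => rfl⟩

/-- The bounded functional `ν̄ : ℓ¹(I) ⊗̂ ℓ¹(I) → ℂ` determined by
`ν̄(a ⊗ b) = ∑_i a(i) b(i)` is nonzero and its kernel is the closed linear span `N`
of the `M_I`-balancing relations; consequently the induced map
`ν : ℓ¹(I) ⊗̂_{M_I} ℓ¹(I) → ℂ` is an isomorphism of Banach spaces. -/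
theorem brandt_morita_stmt2 (I : Type) [Nonempty I] :
    ∃ (lAct : L1 (I × I) →L[ℂ] L1 I →L[ℂ] L1 I)
      (rAct : L1 I →L[ℂ] L1 (I × I) →L[ℂ] L1 I),
      (∀ (a : L1 (I × I)) (x : L1 I) (i : I), lAct a x i = ∑' k : I, a (i, k) * x k) ∧
      (∀ (x : L1 I) (a : L1 (I × I)) (i : I), rAct x a i = ∑' k : I, x k * a (k, i)) ∧
      ∀ (T : Type) [NormedAddCommGroup T] [NormedSpace ℂ T]
        (φ : L1 I →ₗ[ℂ] L1 I →ₗ[ℂ] T), IsProjTensor (L1 I) (L1 I) T φ →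
        (∃ nubar : T →L[ℂ] ℂ,
          (∀ a b : L1 I, nubar (φ a b) = ∑' i : I, a i * b i) ∧
          nubar ≠ 0 ∧
          LinearMap.ker (nubar : T →ₗ[ℂ] ℂ) = balancer φ (fun x a => rAct x a) (fun a y => lAct a y)) ∧
        (∃ nu : (T ⧸ balancer φ (fun x a => rAct x a) (fun a y => lAct a y)) ≃L[ℂ] ℂ,
          ∀ a b : L1 I, nu (Submodule.Quotient.mk (φ a b)) = ∑' i : I, a i * b i) := by
  classical
  refine ⟨L1.mulVec, L1.vecMul, L1.mulVec_apply, L1.vecMul_apply, fun T _ _ φ hφ => ?_⟩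
  obtain ⟨ν, hν⟩ := exists_continuousLinearMap_apply_apply_eq hφ.isometry L1.dotProduct
  have hker : LinearMap.ker (ν : T →ₗ[ℂ] ℂ) = balancer φ _ _ :=
    le_antisymm (ker_le_balancer hφ ν hν) (balancer_le_ker ν hν)
  have hne : ν ≠ 0 := fun h => by
    obtain ⟨i⟩ := ‹Nonempty I›
    simpa [h, L1.dotProduct_single_left] using hν (lp.single 1 i 1) (lp.single 1 i 1)
  obtain ⟨nu, hnu⟩ := ν.exists_quotient_ker_equiv hne
  refine ⟨⟨ν, hν, hne, hker⟩, ?_⟩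
  rw [← hker]
  exact ⟨nu, fun a b => (hnu _).trans (hν a b)⟩
end
end
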